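/- arXiv:1910.05699 — 2 statements merged into one kernel-verified Lean document; each statement's English description precedes it below -/
import Mathlib

section
/- Let M, M' be m×m diagonalizable matrices with M = Q diag(λ₁,…,λ_m) Q⁻¹ and M' = Q' diag(λ'₁,…,λ'_m) Q'⁻¹. For any function f : ℂ → ℂ, ‖Ψ_f(M) − Ψ_f(M')‖_F ≤ κ₂(Q) κ₂(Q') ‖M − M'‖_F · max_{j,k} |(f(λ_j) − f(λ'_k)) / (λ_j − λ'_k)|, with the convention that the quotient is 0 when λ_j = λ'_k. -/
open Matrix

/-- The ℓ² norm of a vector. -/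
noncomputable def l2norm {n : Type*} [Fintype n] (v : n → ℂ) : ℝ :=
  Real.sqrt (∑ i, ‖v i‖ ^ 2)

/-- The Frobenius norm of a matrix. -/
noncomputable def frobNorm {m n : Type*} [Fintype m] [Fintype n] (M : Matrix m n ℂ) : ℝ :=
  Real.sqrt (∑ i, ∑ j, ‖M i j‖ ^ 2)

/-- The spectral (operator) norm of a matrix. -/
noncomputable def specNorm {m n : Type*} [Fintype m] [Fintype n] (M : Matrix m n ℂ) : ℝ :=
  sSup ((fun v : n → ℂ => l2norm (M.mulVec v)) '' {v : n → ℂ | l2norm v ≤ 1})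

/-- The ℓ² condition number of an invertible matrix `Q`:
`κ₂(Q) = σ_max(Q)/σ_min(Q) = ‖Q‖·‖Q⁻¹‖`. -/
noncomputable def cond2 {m : Type*} [Fintype m] [DecidableEq m] (Q : Matrix m m ℂ) : ℝ :=
  specNorm Q * specNorm Q⁻¹

/-
Put `G = Q⁻¹ Q'`. Then `Ψ_f(M) − Ψ_f(M') = Q (F G − G F') Q'⁻¹` and `M − M' = Q (Λ G − G Λ') Q'⁻¹`,
with `Λ, Λ', F, F'` the diagonal matrices of the eigenvalues and of their images under `f`.
The `(j, k)` entries of `F G − G F'` and `Λ G − G Λ'` are `(f λⱼ − f λ'ₖ) Gⱼₖ` and `(λⱼ − λ'ₖ) Gⱼₖ`,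
so the first matrix is the entrywise product of the second with the divided differences, and its
Frobenius norm is at most their maximum times that of the second. Finally
`‖A X B‖_F ≤ ‖A‖₂ ‖X‖_F ‖B‖₂` moves the outer factors out, producing `κ₂(Q) κ₂(Q')`.
-/

section SpecNorm

open scoped Matrix.Norms.L2Operator

variable {m n : Type*} [Fintype m] [Fintype n]

lemma l2norm_eq_norm_toLp (v : n → ℂ) : l2norm v = ‖WithLp.toLp 2 v‖ := by
  simp [l2norm, EuclideanSpace.norm_eq]

lemma l2norm_nonneg (v : n → ℂ) : 0 ≤ l2norm v := Real.sqrt_nonneg _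

lemma l2norm_sq (v : n → ℂ) : l2norm v ^ 2 = ∑ i, ‖v i‖ ^ 2 :=
  Real.sq_sqrt (Finset.sum_nonneg fun _ _ => sq_nonneg _)

variable [DecidableEq n]

lemma specNorm_eq_l2_opNorm (A : Matrix m n ℂ) : specNorm A = ‖A‖ := by
  rw [Matrix.l2_opNorm_def, ← ContinuousLinearMap.sSup_unitClosedBall_eq_norm, specNorm]
  congr 1
  ext r
  constructor
  · rintro ⟨v, hv, rfl⟩
    refine ⟨WithLp.toLp 2 v, ?_, ?_⟩
    · simpa [l2norm_eq_norm_toLp] using hv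
    · simp [l2norm_eq_norm_toLp]
  · rintro ⟨x, hx, rfl⟩
    refine ⟨x.ofLp, ?_, ?_⟩
    · simpa [l2norm_eq_norm_toLp] using hx
    · exact l2norm_eq_norm_toLp _

lemma specNorm_nonneg (A : Matrix m n ℂ) : 0 ≤ specNorm A := by
  rw [specNorm_eq_l2_opNorm]; exact norm_nonneg _

lemma l2norm_mulVec_le (A : Matrix m n ℂ) (v : n → ℂ) :
    l2norm (A *ᵥ v) ≤ specNorm A * l2norm v := by
  rw [specNorm_eq_l2_opNorm, l2norm_eq_norm_toLp, l2norm_eq_norm_toLp]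
  exact A.l2_opNorm_mulVec (WithLp.toLp 2 v)

lemma specNorm_conjTranspose [DecidableEq m] (A : Matrix m n ℂ) : specNorm Aᴴ = specNorm A := by
  rw [specNorm_eq_l2_opNorm, specNorm_eq_l2_opNorm, Matrix.l2_opNorm_conjTranspose]

end SpecNorm

section FrobNorm

variable {l m n : Type*} [Fintype l] [Fintype m] [Fintype n]

lemma frobNorm_nonneg (A : Matrix m n ℂ) : 0 ≤ frobNorm A := Real.sqrt_nonneg _

lemma frobNorm_sq (A : Matrix m n ℂ) : frobNorm A ^ 2 = ∑ i, ∑ j, ‖A i j‖ ^ 2 :=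
  Real.sq_sqrt (Finset.sum_nonneg fun _ _ => Finset.sum_nonneg fun _ _ => sq_nonneg _)

lemma frobNorm_sq_eq_sum_l2norm_col_sq (A : Matrix m n ℂ) :
    frobNorm A ^ 2 = ∑ j, l2norm (fun i => A i j) ^ 2 := by
  simp only [frobNorm_sq, l2norm_sq]
  exact Finset.sum_comm

lemma frobNorm_conjTranspose (A : Matrix m n ℂ) : frobNorm Aᴴ = frobNorm A := by
  simp only [frobNorm, conjTranspose_apply, norm_star]
  rw [Finset.sum_comm]

lemma frobNorm_le_of_norm_apply_le {A B : Matrix m n ℂ} {C : ℝ} (hC : 0 ≤ C)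
    (h : ∀ i j, ‖A i j‖ ≤ C * ‖B i j‖) : frobNorm A ≤ C * frobNorm B := by
  refine (pow_le_pow_iff_left₀ (frobNorm_nonneg A) (mul_nonneg hC (frobNorm_nonneg B))
    two_ne_zero).1 ?_
  simp only [mul_pow, frobNorm_sq, Finset.mul_sum]
  gcongr with i _ j _
  rw [← mul_pow]
  gcongr
  exact h i j

lemma frobNorm_mul_le_specNorm_mul_frobNorm (A : Matrix l m ℂ) (B : Matrix m n ℂ) :
    frobNorm (A * B) ≤ specNorm A * frobNorm B := by
  classical
  refine (pow_le_pow_iff_left₀ (frobNorm_nonneg _)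
    (mul_nonneg (specNorm_nonneg A) (frobNorm_nonneg B)) two_ne_zero).1 ?_
  rw [mul_pow, frobNorm_sq_eq_sum_l2norm_col_sq, frobNorm_sq_eq_sum_l2norm_col_sq, Finset.mul_sum]
  gcongr with j _
  rw [← mul_pow]
  gcongr
  exacts [l2norm_nonneg _, l2norm_mulVec_le A _]

lemma frobNorm_mul_le_frobNorm_mul_specNorm (A : Matrix l m ℂ) (B : Matrix m n ℂ) :
    frobNorm (A * B) ≤ frobNorm A * specNorm B := by
  classical
  rw [← frobNorm_conjTranspose, conjTranspose_mul, mul_comm, ← frobNorm_conjTranspose A,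
    ← specNorm_conjTranspose B]
  exact frobNorm_mul_le_specNorm_mul_frobNorm _ _

lemma frobNorm_mul_mul_le {k : Type*} [Fintype k] (A : Matrix k l ℂ) (B : Matrix l m ℂ)
    (C : Matrix m n ℂ) : frobNorm (A * B * C) ≤ specNorm A * frobNorm B * specNorm C := by
  classical
  calc frobNorm (A * B * C) ≤ frobNorm (A * B) * specNorm C :=
        frobNorm_mul_le_frobNorm_mul_specNorm _ _
    _ ≤ specNorm A * frobNorm B * specNorm C := by
        gcongr
        exacts [specNorm_nonneg C, frobNorm_mul_le_specNorm_mul_frobNorm A B]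

end FrobNorm

section EigenTransform

variable {m n : Type*} [Fintype m] [Fintype n]

lemma diagonal_mul_sub_mul_diagonal_apply {R : Type*} [CommRing R] [DecidableEq m]
    [DecidableEq n] (d : m → R) (d' : n → R) (G : Matrix m n R) (j : m) (k : n) :
    (diagonal d * G - G * diagonal d') j k = (d j - d' k) * G j k := by
  simp only [Matrix.sub_apply, diagonal_mul, mul_diagonal]
  ring

lemma mul_mul_inv_sub_mul_mul_inv {R : Type*} [CommRing R] [DecidableEq m]
    {Q Q' : Matrix m m R} (hQ : IsUnit Q.det) (hQ' : IsUnit Q'.det) (D D' : Matrix m m R) :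
    Q * D * Q⁻¹ - Q' * D' * Q'⁻¹ = Q * (D * (Q⁻¹ * Q') - Q⁻¹ * Q' * D') * Q'⁻¹ := by
  rw [mul_sub, sub_mul, ← mul_assoc, ← mul_assoc, ← mul_assoc,
    mul_nonsing_inv_cancel_right _ _ hQ', mul_nonsing_inv_cancel_left _ _ hQ, mul_assoc Q,
    mul_assoc Q']

lemma frobNorm_diagonal_mul_sub_mul_diagonal_le [DecidableEq m] [DecidableEq n] (f : ℂ → ℂ)
    (lam : m → ℂ) (lam' : n → ℂ) (G : Matrix m n ℂ) {C : ℝ} (hC₀ : 0 ≤ C)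
    (hC : ∀ j k, ‖(f (lam j) - f (lam' k)) / (lam j - lam' k)‖ ≤ C) :
    frobNorm (diagonal (fun i => f (lam i)) * G - G * diagonal (fun i => f (lam' i))) ≤
      C * frobNorm (diagonal lam * G - G * diagonal lam') := by
  refine frobNorm_le_of_norm_apply_le hC₀ fun j k => ?_
  rw [diagonal_mul_sub_mul_diagonal_apply, diagonal_mul_sub_mul_diagonal_apply]
  by_cases h : lam j = lam' k
  · simp only [h, sub_self, zero_mul, norm_zero]
    positivity
  · calc ‖(f (lam j) - f (lam' k)) * G j k‖
        = ‖(f (lam j) - f (lam' k)) / (lam j - lam' k)‖ * ‖(lam j - lam' k) * G j k‖ := by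
          rw [← norm_mul, ← mul_assoc, div_mul_cancel₀ _ (sub_ne_zero.mpr h)]
      _ ≤ C * ‖(lam j - lam' k) * G j k‖ := by gcongr; exact hC j k

end EigenTransform

/-- Bound on the difference of eigenvalue transformations of two diagonalizable matrices
`M = Q diag(λ) Q⁻¹` and `M' = Q' diag(λ') Q'⁻¹`, where
`Ψ_f(M) = Q diag(f(λ)) Q⁻¹`, and the max is over all divided differences
`|(f(λⱼ) − f(λ'ₖ))/(λⱼ − λ'ₖ)|` (taken to be `0` when `λⱼ = λ'ₖ`). -/
theorem eigen_transform_dist_le {m : ℕ}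
    (M M' Q Q' : Matrix (Fin m) (Fin m) ℂ)
    (hQ : IsUnit Q.det) (hQ' : IsUnit Q'.det)
    (lam lam' : Fin m → ℂ)
    (hM : M = Q * diagonal lam * Q⁻¹)
    (hM' : M' = Q' * diagonal lam' * Q'⁻¹)
    (f : ℂ → ℂ) :
    frobNorm (Q * diagonal (fun i => f (lam i)) * Q⁻¹ -
        Q' * diagonal (fun i => f (lam' i)) * Q'⁻¹) ≤
      cond2 Q * cond2 Q' * frobNorm (M - M') *
        sSup (Set.range fun p : Fin m × Fin m =>
          if lam p.1 = lam' p.2 then 0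
          else ‖(f (lam p.1) - f (lam' p.2)) / (lam p.1 - lam' p.2)‖) := by
  set C := sSup (Set.range fun p : Fin m × Fin m =>
    if lam p.1 = lam' p.2 then 0
    else ‖(f (lam p.1) - f (lam' p.2)) / (lam p.1 - lam' p.2)‖)
  have hC₀ : 0 ≤ C := Real.sSup_nonneg <| by
    rintro _ ⟨p, rfl⟩
    beta_reduce
    split_ifs <;> positivity
  have hC (j k : Fin m) : ‖(f (lam j) - f (lam' k)) / (lam j - lam' k)‖ ≤ C := by
    refine le_trans ?_ (le_csSup (Set.finite_range _).bddAbove ⟨(j, k), rfl⟩)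
    beta_reduce
    -- where `lam j = lam' k` the quotient is `0 / 0 = 0` as well
    split_ifs with h <;> simp [h]
  set G := Q⁻¹ * Q'
  have hΔ : Q⁻¹ * (M - M') * Q' = diagonal lam * G - G * diagonal lam' := by
    rw [hM, hM', mul_mul_inv_sub_mul_mul_inv hQ hQ', Matrix.mul_assoc Q,
      nonsing_inv_mul_cancel_left _ _ hQ, nonsing_inv_mul_cancel_right _ _ hQ']
  calc _ = frobNorm (Q * (diagonal (fun i => f (lam i)) * G - G * diagonal (fun i => f (lam' i)))
        * Q'⁻¹) := by rw [mul_mul_inv_sub_mul_mul_inv hQ hQ']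
    _ ≤ specNorm Q * (C * frobNorm (Q⁻¹ * (M - M') * Q')) * specNorm Q'⁻¹ := by
        refine (frobNorm_mul_mul_le _ _ _).trans ?_
        rw [hΔ]
        gcongr
        exacts [specNorm_nonneg _, specNorm_nonneg _,
          frobNorm_diagonal_mul_sub_mul_diagonal_le f lam lam' G hC₀ hC]
    _ ≤ specNorm Q * (C * (specNorm Q⁻¹ * frobNorm (M - M') * specNorm Q')) * specNorm Q'⁻¹ := by
        gcongr
        exacts [specNorm_nonneg _, specNorm_nonneg _, frobNorm_mul_mul_le _ _ _]
    _ = cond2 Q * cond2 Q' * frobNorm (M - M') * C := by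
        rw [cond2, cond2]
        ring
end

section
/- Let A ∈ ℂ^{m×n} and f : ℝ_{≥0} → ℝ_{≥0} with f(0) = 0. Define h : ℝ_{≥0} → ℝ_{≥0} by h(0) = 0 and h(x) = f(√x)/√x for x > 0. Then Φ_h(A*A) · A* = Φ_f(A*). -/
/-! Expanding `Aᴴ = ∑ σⱼ vⱼ uⱼ*`, orthonormality of the `vᵢ` makes the product of the two rank-one
expansions diagonal, with coefficients `h(σᵢ²) σᵢ = (f(σᵢ)/σᵢ) σᵢ = f(σᵢ)` since `σᵢ > 0`. -/

open Matrix

section RankOneSums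

variable {ι l m n α : Type*} [Fintype ι] [Fintype m]

theorem sum_smul_vecMulVec_mul_sum_smul_vecMulVec [DecidableEq ι] [CommSemiring α]
    {v : ι → m → α} {x : ι → m → α} (hxv : ∀ i j, x i ⬝ᵥ v j = if i = j then 1 else 0)
    (a b : ι → α) (y : ι → l → α) (w : ι → n → α) :
    (∑ i, a i • vecMulVec (y i) (x i)) * ∑ j, b j • vecMulVec (v j) (w j) =
      ∑ i, (a i * b i) • vecMulVec (y i) (w i) := by
  have summand : ∀ i j, (a i • vecMulVec (y i) (x i)) * (b j • vecMulVec (v j) (w j)) =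
      if i = j then (a i * b i) • vecMulVec (y i) (w i) else 0 := by
    intro i j
    rw [Matrix.smul_mul, Matrix.mul_smul, vecMulVec_mul_vecMulVec, hxv, smul_smul]
    split_ifs with hij
    · rw [hij, one_smul, mul_comm]
    · ext; simp [vecMulVec_apply]
  rw [Matrix.sum_mul]
  simp only [Matrix.mul_sum, summand, Finset.sum_ite_eq, Finset.mem_univ, if_true]

theorem conjTranspose_sum_ofReal_smul_vecMulVec_star
    (c : ι → ℝ) (u : ι → l → ℂ) (v : ι → n → ℂ) :
    (∑ i, (c i : ℂ) • vecMulVec (u i) (star (v i)))ᴴ =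
      ∑ i, (c i : ℂ) • vecMulVec (v i) (star (u i)) := by
  simp [conjTranspose_sum, conjTranspose_smul]

end RankOneSums

theorem apply_sq_mul_eq_of_eq_div_sqrt {f h : ℝ → ℝ} (hh : ∀ x > 0, h x = f (√x) / √x)
    {s : ℝ} (hs : 0 < s) : h (s ^ 2) * s = f s := by
  rw [hh _ (by positivity), Real.sqrt_sq hs.le, div_mul_cancel₀ _ hs.ne']

theorem svt_h_mul_conjTranspose_general {m n k : ℕ}
    (σ : Fin k → ℝ) (u : Fin k → Fin m → ℂ) (v : Fin k → Fin n → ℂ)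
    (hv : ∀ i j, star (v i) ⬝ᵥ v j = if i = j then 1 else 0)
    (hσ : ∀ i, 0 < σ i)
    (A : Matrix (Fin m) (Fin n) ℂ)
    (hA : A = ∑ i, ((σ i : ℝ) : ℂ) • vecMulVec (u i) (star (v i)))
    (f h : ℝ → ℝ)
    (hh : ∀ x > 0, h x = f (Real.sqrt x) / Real.sqrt x) :
    (∑ i, ((h ((σ i) ^ 2) : ℝ) : ℂ) • vecMulVec (v i) (star (v i))) * Aᴴ =
      ∑ i, ((f (σ i) : ℝ) : ℂ) • vecMulVec (v i) (star (u i)) := by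
  rw [hA, conjTranspose_sum_ofReal_smul_vecMulVec_star,
    sum_smul_vecMulVec_mul_sum_smul_vecMulVec hv]
  simp_rw [← Complex.ofReal_mul, apply_sq_mul_eq_of_eq_div_sqrt hh (hσ _)]

/-- Let `A = Σᵢ σᵢ uᵢ vᵢ*` be a (compact) SVD with positive singular values, `f(0) = 0`, and
`h(x) = f(√x)/√x` for `x > 0`, `h(0) = 0`. Then `Φ_h(A*A) · A* = Φ_f(A*)`, where
`Φ_h(A*A) = Σᵢ h(σᵢ²) vᵢ vᵢ*` and `Φ_f(A*) = Σᵢ f(σᵢ) vᵢ uᵢ*`. -/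
theorem svt_h_mul_conjTranspose {m n k : ℕ}
    (σ : Fin k → ℝ) (u : Fin k → Fin m → ℂ) (v : Fin k → Fin n → ℂ)
    (hu : ∀ i j, star (u i) ⬝ᵥ u j = if i = j then 1 else 0)
    (hv : ∀ i j, star (v i) ⬝ᵥ v j = if i = j then 1 else 0)
    (hσ : ∀ i, 0 < σ i)
    (A : Matrix (Fin m) (Fin n) ℂ)
    (hA : A = ∑ i, ((σ i : ℝ) : ℂ) • vecMulVec (u i) (star (v i)))
    (f h : ℝ → ℝ) (hf0 : f 0 = 0) (hfnn : ∀ x, 0 ≤ x → 0 ≤ f x)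
    (hh0 : h 0 = 0) (hh : ∀ x > 0, h x = f (Real.sqrt x) / Real.sqrt x) :
    (∑ i, ((h ((σ i) ^ 2) : ℝ) : ℂ) • vecMulVec (v i) (star (v i))) * Aᴴ =
      ∑ i, ((f (σ i) : ℝ) : ℂ) • vecMulVec (v i) (star (u i)) :=
  svt_h_mul_conjTranspose_general σ u v hv hσ A hA f h hh
end
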